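/- Let I ⊆ K[x_0, …, x_N] be the radical ideal of a finite nonempty set of distinct points in P^N. If I^{(t(m+N−1))} ⊆ M^{t(N−1)} (I^{(m)})^t holds for all positive integers m and t, then (α(I^{(m)}) + N − 1)/(m + N − 1) ≤ α(I^{(t)})/t holds for all positive integers m and t. -/

import Mathlib

open MvPolynomial

noncomputable section

/-- The ideal generated by all homogeneous forms vanishing at the point with
coordinate vector `p`. -/
def homVanishingIdeal {K σ : Type*} [Field K] (p : σ → K) : Ideal (MvPolynomial σ K) :=
  Ideal.span {F : MvPolynomial σ K | (∃ d, F.IsHomogeneous d) ∧ MvPolynomial.eval p F = 0}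

/-- The `m`-th symbolic power of the radical ideal of the finite set of points
with coordinate vectors `P i`: the intersection of the `m`-th powers of the
ideals of the individual points. -/
def symbPow {K σ ι : Type*} [Field K] (P : ι → σ → K) (m : ℕ) : Ideal (MvPolynomial σ K) :=
  ⨅ i, homVanishingIdeal (P i) ^ m

/-- The irrelevant maximal ideal `M = (x_0, …, x_N)`. -/
def irrel (K σ : Type*) [Field K] : Ideal (MvPolynomial σ K) :=
  Ideal.span (Set.range (MvPolynomial.X : σ → MvPolynomial σ K))

/-- The coordinate vectors `P i` are nonzero and represent pairwise distinct
points of projective space (no two are proportional). -/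
def ProjectivelyDistinct {K σ ι : Type*} [Field K] (P : ι → σ → K) : Prop :=
  (∀ i, P i ≠ 0) ∧ Pairwise fun i j => ∀ c : K, P i ≠ c • P j

/-- `α(J)`: the least degree of a nonzero homogeneous element of `J`. -/
def idealAlpha {K σ : Type*} [Field K] (J : Ideal (MvPolynomial σ K)) : ℕ :=
  sInf {d : ℕ | ∃ F ∈ J, F ≠ 0 ∧ MvPolynomial.IsHomogeneous F d}

/-!
Put `s = t(m+N-1)`. A homogeneous ideal `J` lies in `M^{α(J)}`, and a nonzero form of degree `d`
in `M^k` has `k ≤ d`. Applied to a nonzero form of minimal degree in `I^{(s)}` (which is nonzero,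
as it contains products of linear forms through the points), the hypothesis
`I^{(s)} ⊆ M^{t(N-1)} (I^{(m)})^t ⊆ M^{t(N-1) + t α(I^{(m)})}` gives
`t(N-1) + t α(I^{(m)}) ≤ α(I^{(s)})`, while `(I^{(t)})^{m+N-1} ⊆ I^{(s)}` gives
`α(I^{(s)}) ≤ (m+N-1) α(I^{(t)})`.
-/

attribute [local instance] MvPolynomial.gradedAlgebra

theorem Ideal.iInf_ne_bot_of_forall_ne_bot {R ι : Type*} [CommRing R] [IsDomain R] [Fintype ι]
    {A : ι → Ideal R} (hA : ∀ i, A i ≠ ⊥) : ⨅ i, A i ≠ ⊥ :=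
  ne_bot_of_le_ne_bot (Finset.prod_ne_zero_iff.mpr fun i _ => hA i)
    (Ideal.prod_le_inf.trans (Finset.inf_univ_eq_iInf A).le)

theorem Ideal.IsHomogeneous.pow {A ι S : Type*} [CommSemiring A] [DecidableEq ι] [AddMonoid ι]
    [SetLike S A] [AddSubmonoidClass S A] {𝒜 : ι → S} [GradedRing 𝒜] {I : Ideal A}
    (hI : I.IsHomogeneous 𝒜) :
    ∀ k : ℕ, (I ^ k).IsHomogeneous 𝒜
  | 0 => by simpa [Ideal.one_eq_top] using Ideal.IsHomogeneous.top 𝒜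
  | k + 1 => by rw [pow_succ]; exact (hI.pow k).mul hI

section Graded

variable {R σ : Type*} [CommSemiring R]

theorem Ideal.IsHomogeneous.homogeneousComponent_mem {J : Ideal (MvPolynomial σ R)}
    (hJ : J.IsHomogeneous (homogeneousSubmodule σ R)) {f : MvPolynomial σ R} (hf : f ∈ J)
    (i : ℕ) : homogeneousComponent i f ∈ J := by
  simpa [← decomposition.decompose'_apply] using hJ i hf

theorem MvPolynomial.homogeneousComponent_degree_ne_zero {f : MvPolynomial σ R} {x : σ →₀ ℕ}
    (hx : x ∈ f.support) : homogeneousComponent x.degree f ≠ 0 := fun h0 =>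
  mem_support_iff.mp hx (by simpa [coeff_homogeneousComponent] using congrArg (coeff x) h0)

theorem MvPolynomial.IsHomogeneous.le_of_mem_pow_idealOfVars {F : MvPolynomial σ R} {k d : ℕ}
    (hd : F.IsHomogeneous d) (hF : F ∈ idealOfVars σ R ^ k) (hF0 : F ≠ 0) : k ≤ d := by
  obtain ⟨x, hx⟩ := support_nonempty.mpr hF0
  have hxd : x.degree = d := by
    rw [Finsupp.degree_eq_weight_one]; exact hd (mem_support_iff.mp hx)
  exact hxd ▸ (mem_pow_idealOfVars_iff k F).mp hF x hx

end Graded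

section HomogeneousIdeals

variable {K σ : Type*} [Field K] {J : Ideal (MvPolynomial σ K)}

theorem idealAlpha_le {F : MvPolynomial σ K} (hF : F ∈ J) (hF0 : F ≠ 0) {d : ℕ}
    (hd : F.IsHomogeneous d) : idealAlpha J ≤ d :=
  Nat.sInf_le ⟨F, hF, hF0, hd⟩

theorem Ideal.IsHomogeneous.exists_isHomogeneous_idealAlpha
    (hJ : J.IsHomogeneous (homogeneousSubmodule σ K)) (hJ0 : J ≠ ⊥) :
    ∃ F ∈ J, F ≠ 0 ∧ F.IsHomogeneous (idealAlpha J) := by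
  obtain ⟨f, hf, hf0⟩ := Submodule.exists_mem_ne_zero_of_ne_bot hJ0
  obtain ⟨x, hx⟩ := support_nonempty.mpr hf0
  exact Nat.sInf_mem (s := {d | ∃ F ∈ J, F ≠ 0 ∧ F.IsHomogeneous d})
    ⟨x.degree, _, hJ.homogeneousComponent_mem hf x.degree,
      homogeneousComponent_degree_ne_zero hx, homogeneousComponent_isHomogeneous _ _⟩

theorem Ideal.IsHomogeneous.le_pow_idealOfVars_idealAlpha
    (hJ : J.IsHomogeneous (homogeneousSubmodule σ K)) : J ≤ idealOfVars σ K ^ idealAlpha J :=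
  fun f hf => (mem_pow_idealOfVars_iff _ f).mpr fun x hx =>
    idealAlpha_le (hJ.homogeneousComponent_mem hf x.degree)
      (homogeneousComponent_degree_ne_zero hx) (homogeneousComponent_isHomogeneous _ _)

theorem Ideal.IsHomogeneous.le_idealAlpha_of_le_pow_idealOfVars
    (hJ : J.IsHomogeneous (homogeneousSubmodule σ K)) (hJ0 : J ≠ ⊥) {k : ℕ}
    (hk : J ≤ idealOfVars σ K ^ k) : k ≤ idealAlpha J := by
  obtain ⟨F, hF, hF0, hFd⟩ := hJ.exists_isHomogeneous_idealAlpha hJ0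
  exact hFd.le_of_mem_pow_idealOfVars (hk hF) hF0

theorem Ideal.IsHomogeneous.idealAlpha_le_of_pow_le {I : Ideal (MvPolynomial σ K)}
    (hI : I.IsHomogeneous (homogeneousSubmodule σ K)) (hI0 : I ≠ ⊥) {k : ℕ} (hIJ : I ^ k ≤ J) :
    idealAlpha J ≤ k * idealAlpha I := by
  obtain ⟨F, hF, hF0, hFd⟩ := hI.exists_isHomogeneous_idealAlpha hI0
  rw [mul_comm]
  exact idealAlpha_le (hIJ (Ideal.pow_mem_pow hF k)) (pow_ne_zero k hF0) (hFd.pow k)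

end HomogeneousIdeals

section SymbolicPowers

variable {K σ ι : Type*} [Field K]

theorem isHomogeneous_homVanishingIdeal (p : σ → K) :
    (homVanishingIdeal p).IsHomogeneous (homogeneousSubmodule σ K) := by
  apply Ideal.homogeneous_span
  rintro F ⟨⟨d, hd⟩, -⟩
  exact ⟨d, hd⟩

theorem isHomogeneous_symbPow (P : ι → σ → K) (m : ℕ) :
    (symbPow P m).IsHomogeneous (homogeneousSubmodule σ K) :=
  Ideal.IsHomogeneous.iInf fun i => (isHomogeneous_homVanishingIdeal (P i)).pow m

theorem symbPow_pow_le (P : ι → σ → K) (t k : ℕ) : symbPow P t ^ k ≤ symbPow P (t * k) :=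
  le_iInf fun i => pow_mul (homVanishingIdeal (P i)) t k ▸ Ideal.pow_right_mono (iInf_le _ i) k

theorem homVanishingIdeal_ne_bot [Nontrivial σ] {p : σ → K} (hp : p ≠ 0) :
    homVanishingIdeal p ≠ ⊥ := by
  obtain ⟨j, hj⟩ := Function.ne_iff.mp hp
  obtain ⟨j', hj'⟩ := exists_ne j
  have hL : (C (p j) * X j' - C (p j') * X j : MvPolynomial σ K).IsHomogeneous 1 :=
    (isHomogeneous_C_mul_X (p j) j').sub (isHomogeneous_C_mul_X (p j') j)
  refine (Submodule.ne_bot_iff _).mpr ⟨_, Ideal.subset_span ⟨⟨1, hL⟩, ?_⟩, fun h0 => hj ?_⟩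
  · simp [mul_comm]
  · classical
    simpa [coeff_X, Finsupp.single_left_inj one_ne_zero, hj'.symm] using
      congrArg (coeff (Finsupp.single j' 1)) h0

theorem symbPow_ne_bot [Nontrivial σ] [Fintype ι] {P : ι → σ → K} (hP : ∀ i, P i ≠ 0)
    (m : ℕ) : symbPow P m ≠ ⊥ :=
  Ideal.iInf_ne_bot_of_forall_ne_bot fun i => pow_ne_zero m (homVanishingIdeal_ne_bot (hP i))

end SymbolicPowers

theorem stmt5_general {K : Type*} [Field K]
    {N n : ℕ} (hN : 1 ≤ N)
    (P : Fin n → (Fin (N + 1) → K)) (hP : ProjectivelyDistinct P)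
    (h : ∀ m t : ℕ, 1 ≤ m → 1 ≤ t →
      symbPow P (t * (m + N - 1)) ≤
        irrel K (Fin (N + 1)) ^ (t * (N - 1)) * symbPow P m ^ t) :
    ∀ m t : ℕ, 1 ≤ m → 1 ≤ t →
      ((idealAlpha (symbPow P m) : ℚ) + (N : ℚ) - 1) / ((m : ℚ) + (N : ℚ) - 1) ≤
        (idealAlpha (symbPow P t) : ℚ) / (t : ℚ) := by
  intro m t hm ht
  have : Nontrivial (Fin (N + 1)) := Fin.nontrivial_iff_two_le.mpr (by omega)
  set s := t * (m + N - 1)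
  have hlow : t * (N - 1) + t * idealAlpha (symbPow P m) ≤ idealAlpha (symbPow P s) := by
    refine (isHomogeneous_symbPow P s).le_idealAlpha_of_le_pow_idealOfVars
      (symbPow_ne_bot hP.1 s) ((h m t hm ht).trans ?_)
    have hirrel : irrel K (Fin (N + 1)) = idealOfVars (Fin (N + 1)) K := rfl
    rw [hirrel, pow_add, pow_mul' _ t (idealAlpha (symbPow P m))]
    exact Ideal.mul_mono_right
      (Ideal.pow_right_mono (isHomogeneous_symbPow P m).le_pow_idealOfVars_idealAlpha t)
  have hup : idealAlpha (symbPow P s) ≤ (m + N - 1) * idealAlpha (symbPow P t) :=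
    (isHomogeneous_symbPow P t).idealAlpha_le_of_pow_le (symbPow_ne_bot hP.1 t)
      (symbPow_pow_le P t _)
  have hkey : ((t * (N - 1) + t * idealAlpha (symbPow P m) : ℕ) : ℚ) ≤
      (((m + N - 1) * idealAlpha (symbPow P t) : ℕ) : ℚ) := by
    exact_mod_cast hlow.trans hup
  push_cast [Nat.cast_sub (show 1 ≤ N by omega), Nat.cast_sub (show 1 ≤ m + N by omega)] at hkey
  have hmN : (0 : ℚ) < m + N - 1 := by
    have : (1 : ℚ) ≤ m := by exact_mod_cast hm
    have : (1 : ℚ) ≤ N := by exact_mod_cast hN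
    linarith
  rw [div_le_div_iff₀ hmN (by exact_mod_cast ht)]
  linarith

/-- If `I^{(t(m+N-1))} ⊆ M^{t(N-1)} (I^{(m)})^t` for all `m, t ≥ 1`, then
`(α(I^{(m)}) + N - 1)/(m + N - 1) ≤ α(I^{(t)})/t` for all `m, t ≥ 1`. -/
theorem stmt5 {K : Type*} [Field K] [IsAlgClosed K]
    {N n : ℕ} (hN : 1 ≤ N) (hn : 1 ≤ n)
    (P : Fin n → (Fin (N + 1) → K)) (hP : ProjectivelyDistinct P)
    (h : ∀ m t : ℕ, 1 ≤ m → 1 ≤ t →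
      symbPow P (t * (m + N - 1)) ≤
        irrel K (Fin (N + 1)) ^ (t * (N - 1)) * symbPow P m ^ t) :
    ∀ m t : ℕ, 1 ≤ m → 1 ≤ t →
      ((idealAlpha (symbPow P m) : ℚ) + (N : ℚ) - 1) / ((m : ℚ) + (N : ℚ) - 1) ≤
        (idealAlpha (symbPow P t) : ℚ) / (t : ℚ) :=
  stmt5_general hN P hP h
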